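/- If the evolution family Φ has a uniform h-dichotomy on [e∗, +∞) with constants K ≥ 1 and α > 0, then Φ is h-expansive on [e∗, +∞) with constants L = K and β = α; that is, every solution satisfies |x(t)| ≤ K·[h(t∗a^{∗-1})^{-α}·|x(a)| + h(b∗t^{∗-1})^{-α}·|x(b)|] whenever [a,b] ⊆ [e∗, +∞) and a ≤ t ≤ b. -/

import Mathlib

open Set

noncomputable section

/-- The operation `t ∗ s := h⁻¹ (h t · h s)` on `J`. -/
def star (h hinv : ℝ → ℝ) (t s : ℝ) : ℝ := hinv (h t * h s)

/-- The unit element `e∗ := h⁻¹ 1`. -/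
def estar (hinv : ℝ → ℝ) : ℝ := hinv 1

/-- The inverse `t^{∗-1} := h⁻¹ (1 / h t)`. -/
def sinv (h hinv : ℝ → ℝ) (t : ℝ) : ℝ := hinv (1 / h t)

/-- The absolute value `|t|∗ := t` if `e∗ ≤ t` and `t^{∗-1}` otherwise. -/
def absStar (h hinv : ℝ → ℝ) (t : ℝ) : ℝ := if estar hinv ≤ t then t else sinv h hinv t

/-- `h : J → (0,∞)` is a growth rate: a strictly increasing homeomorphism of
`J = (a₀,∞)` (or `J = ℝ`) onto `(0,∞)`, with (two-sided) inverse `hinv`. -/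
structure GrowthRate (J : Set ℝ) (h hinv : ℝ → ℝ) : Prop where
  J_eq : (∃ a₀ : ℝ, J = Set.Ioi a₀) ∨ J = Set.univ
  mono : StrictMonoOn h J
  cont : ContinuousOn h J
  pos : ∀ t ∈ J, 0 < h t
  inv_left : ∀ t ∈ J, hinv (h t) = t
  inv_mem : ∀ y ∈ Set.Ioi (0:ℝ), hinv y ∈ J
  inv_right : ∀ y ∈ Set.Ioi (0:ℝ), h (hinv y) = y
  inv_cont : ContinuousOn hinv (Set.Ioi 0)

variable {E : Type*} [NormedAddCommGroup E] [NormedSpace ℝ E]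

/-- An evolution family on `J`: `Φ t t = I` and `Φ t u ∘ Φ u s = Φ t s`. -/
def IsEvolutionFamily (J : Set ℝ) (Φ : ℝ → ℝ → (E →L[ℝ] E)) : Prop :=
  (∀ t ∈ J, Φ t t = 1) ∧ (∀ t ∈ J, ∀ u ∈ J, ∀ s ∈ J, Φ t u * Φ u s = Φ t s)

/-- `Φ` has a uniform `h`-dichotomy on `I` with projections `P` and constants `K, α`. -/
def HasUHDWith (I : Set ℝ) (h : ℝ → ℝ) (Φ : ℝ → ℝ → (E →L[ℝ] E))
    (P : ℝ → (E →L[ℝ] E)) (K α : ℝ) : Prop :=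
  (∀ t ∈ I, P t * P t = P t) ∧
  (∀ t ∈ I, ∀ s ∈ I, P t * Φ t s = Φ t s * P s) ∧
  (∀ s ∈ I, ∀ t ∈ I, s ≤ t → ‖Φ t s * P s‖ ≤ K * (h t / h s) ^ (-α)) ∧
  (∀ s ∈ I, ∀ t ∈ I, t ≤ s → ‖Φ t s * (1 - P s)‖ ≤ K * (h s / h t) ^ (-α))

/-- `Φ` has a uniform `h`-dichotomy on `I`. -/
def HasUHD (I : Set ℝ) (h : ℝ → ℝ) (Φ : ℝ → ℝ → (E →L[ℝ] E)) : Prop :=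
  ∃ K ≥ (1:ℝ), ∃ α > (0:ℝ), ∃ P : ℝ → (E →L[ℝ] E), HasUHDWith I h Φ P K α

/-- Uniform bounded `h`-growth on `I`: every solution satisfies
`|x t| ≤ C |x s|` for `s ∈ I` and `t ∈ [s, s∗T] ∩ I`. -/
def UnifBoundedHGrowth (J I : Set ℝ) (h hinv : ℝ → ℝ) (Φ : ℝ → ℝ → (E →L[ℝ] E)) : Prop :=
  ∃ T > estar hinv, ∃ C ≥ (1:ℝ), ∀ s₀ ∈ J, ∀ ξ : E, ∀ s ∈ I, ∀ t ∈ I,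
    s ≤ t → t ≤ star h hinv s T → ‖(Φ t s₀) ξ‖ ≤ C * ‖(Φ s s₀) ξ‖

/-- Uniform bounded `h`-decay on `I`: every solution satisfies
`|x t| ≤ C |x s|` for `s ∈ I` and `t ∈ [s∗T^{∗-1}, s] ∩ I`. -/
def UnifBoundedHDecay (J I : Set ℝ) (h hinv : ℝ → ℝ) (Φ : ℝ → ℝ → (E →L[ℝ] E)) : Prop :=
  ∃ T > estar hinv, ∃ C ≥ (1:ℝ), ∀ s₀ ∈ J, ∀ ξ : E, ∀ s ∈ I, ∀ t ∈ I,
    star h hinv s (sinv h hinv T) ≤ t → t ≤ s → ‖(Φ t s₀) ξ‖ ≤ C * ‖(Φ s s₀) ξ‖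

/-- Uniform bounded `h`-growth and `h`-decay on `I`: every solution satisfies
`|x t| ≤ C |x s|` for `s ∈ I` and `t ∈ [s∗T^{∗-1}, s∗T] ∩ I`. -/
def UnifBoundedHGrowthDecay (J I : Set ℝ) (h hinv : ℝ → ℝ) (Φ : ℝ → ℝ → (E →L[ℝ] E)) : Prop :=
  ∃ T > estar hinv, ∃ C ≥ (1:ℝ), ∀ s₀ ∈ J, ∀ ξ : E, ∀ s ∈ I, ∀ t ∈ I,
    star h hinv s (sinv h hinv T) ≤ t → t ≤ star h hinv s T → ‖(Φ t s₀) ξ‖ ≤ C * ‖(Φ s s₀) ξ‖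

/-- `Φ` is uniformly `h`-noncritical on `[e∗,∞)`: there are `T > e∗` and `θ ∈ (0,1)` with
`|x t| ≤ θ · sup {|x u| : u ∈ J, |u ∗ t^{∗-1}|∗ ≤ T}` for all `t ≥ T`, for every solution. -/
def UnifHNoncritical (J : Set ℝ) (h hinv : ℝ → ℝ) (Φ : ℝ → ℝ → (E →L[ℝ] E)) : Prop :=
  ∃ T > estar hinv, ∃ θ : ℝ, 0 < θ ∧ θ < 1 ∧
    ∀ s₀ ∈ J, ∀ ξ : E, ∀ t, T ≤ t →
      ‖(Φ t s₀) ξ‖ ≤ θ * sSup ((fun u => ‖(Φ u s₀) ξ‖) ''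
        {u | u ∈ J ∧ absStar h hinv (star h hinv u (sinv h hinv t)) ≤ T})

/-- `Φ` is `h`-expansive on `I`: there are `L, β > 0` such that every solution satisfies
`|x t| ≤ L (h(t∗a^{∗-1})^{-β} |x a| + h(b∗t^{∗-1})^{-β} |x b|)` for `[a,b] ⊆ I`, `a ≤ t ≤ b`. -/
def HExpansive (J I : Set ℝ) (h hinv : ℝ → ℝ) (Φ : ℝ → ℝ → (E →L[ℝ] E)) : Prop :=
  ∃ L > (0:ℝ), ∃ β > (0:ℝ), ∀ s₀ ∈ J, ∀ ξ : E, ∀ a ∈ I, ∀ b ∈ I, ∀ t, a ≤ t → t ≤ b →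
    ‖(Φ t s₀) ξ‖ ≤ L * ((h (star h hinv t (sinv h hinv a))) ^ (-β) * ‖(Φ a s₀) ξ‖ +
      (h (star h hinv b (sinv h hinv t))) ^ (-β) * ‖(Φ b s₀) ξ‖)

namespace GrowthRate

variable {J : Set ℝ} {h hinv : ℝ → ℝ}

theorem estar_mem (hgr : GrowthRate J h hinv) : estar hinv ∈ J :=
  hgr.inv_mem 1 (mem_Ioi.mpr one_pos)

theorem Ici_estar_subset (hgr : GrowthRate J h hinv) : Ici (estar hinv) ⊆ J := by
  rcases hgr.J_eq with ⟨a₀, rfl⟩ | rfl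
  · exact fun _ hx => mem_Ioi.mpr (lt_of_lt_of_le hgr.estar_mem hx)
  · exact subset_univ _

theorem apply_star_sinv (hgr : GrowthRate J h hinv) {u s : ℝ} (hu : u ∈ J) (hs : s ∈ J) :
    h (star h hinv u (sinv h hinv s)) = h u / h s := by
  have hs₀ := hgr.pos s hs
  have hu₀ := hgr.pos u hu
  have h_sinv : h (sinv h hinv s) = 1 / h s := hgr.inv_right _ (mem_Ioi.mpr (one_div_pos.mpr hs₀))
  rw [_root_.star, h_sinv, mul_one_div, hgr.inv_right _ (mem_Ioi.mpr (div_pos hu₀ hs₀))]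

end GrowthRate

namespace IsEvolutionFamily

variable {J : Set ℝ} {Φ : ℝ → ℝ → (E →L[ℝ] E)} {P : ℝ → (E →L[ℝ] E)}

theorem eq_stable_add_unstable (hΦ : IsEvolutionFamily J Φ) {s₀ a t b : ℝ}
    (hs₀ : s₀ ∈ J) (ha : a ∈ J) (ht : t ∈ J) (hb : b ∈ J)
    (hPa : P t * Φ t a = Φ t a * P a) (hPb : P t * Φ t b = Φ t b * P b) :
    Φ t s₀ = Φ t a * P a * Φ a s₀ + Φ t b * (1 - P b) * Φ b s₀ := by
  have hb' : Φ t b * (1 - P b) = (1 - P t) * Φ t b := by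
    rw [mul_sub, sub_mul, mul_one, one_mul, hPb]
  rw [← hPa, hb', mul_assoc, mul_assoc, hΦ.2 t ht a ha s₀ hs₀, hΦ.2 t ht b hb s₀ hs₀,
    ← add_mul, add_sub_cancel, one_mul]

theorem norm_apply_le (hΦ : IsEvolutionFamily J Φ) {s₀ a t b : ℝ}
    (hs₀ : s₀ ∈ J) (ha : a ∈ J) (ht : t ∈ J) (hb : b ∈ J)
    (hPa : P t * Φ t a = Φ t a * P a) (hPb : P t * Φ t b = Φ t b * P b) (ξ : E) :
    ‖Φ t s₀ ξ‖ ≤ ‖Φ t a * P a‖ * ‖Φ a s₀ ξ‖ + ‖Φ t b * (1 - P b)‖ * ‖Φ b s₀ ξ‖ := by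
  rw [hΦ.eq_stable_add_unstable hs₀ ha ht hb hPa hPb]
  refine (norm_add_le _ _).trans (add_le_add ?_ ?_) <;>
    exact (Φ _ _ * _).le_opNorm _

theorem norm_apply_le_of_hasUHDWith (hΦ : IsEvolutionFamily J Φ) {I : Set ℝ} (hIJ : I ⊆ J)
    {h : ℝ → ℝ} {K α : ℝ} (hUHD : HasUHDWith I h Φ P K α) {s₀ a t b : ℝ} (hs₀ : s₀ ∈ J)
    (ha : a ∈ I) (ht : t ∈ I) (hb : b ∈ I) (hat : a ≤ t) (htb : t ≤ b) (ξ : E) :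
    ‖Φ t s₀ ξ‖ ≤ K * ((h t / h a) ^ (-α) * ‖Φ a s₀ ξ‖ + (h b / h t) ^ (-α) * ‖Φ b s₀ ξ‖) := by
  obtain ⟨-, hcomm, hstable, hunstable⟩ := hUHD
  calc ‖Φ t s₀ ξ‖
      ≤ ‖Φ t a * P a‖ * ‖Φ a s₀ ξ‖ + ‖Φ t b * (1 - P b)‖ * ‖Φ b s₀ ξ‖ :=
        hΦ.norm_apply_le hs₀ (hIJ ha) (hIJ ht) (hIJ hb) (hcomm t ht a ha) (hcomm t ht b hb) ξ
    _ ≤ K * (h t / h a) ^ (-α) * ‖Φ a s₀ ξ‖ + K * (h b / h t) ^ (-α) * ‖Φ b s₀ ξ‖ := by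
        gcongr
        exacts [hstable a ha t ht hat, hunstable b hb t ht htb]
    _ = K * ((h t / h a) ^ (-α) * ‖Φ a s₀ ξ‖ + (h b / h t) ^ (-α) * ‖Φ b s₀ ξ‖) := by ring

end IsEvolutionFamily

theorem statement14_general {J : Set ℝ} {h hinv : ℝ → ℝ} (hgr : GrowthRate J h hinv)
    {E : Type*} [NormedAddCommGroup E] [NormedSpace ℝ E]
    (Φ : ℝ → ℝ → (E →L[ℝ] E)) (hΦ : IsEvolutionFamily J Φ)
    (K α : ℝ)
    (P : ℝ → (E →L[ℝ] E)) (hUHD : HasUHDWith (Set.Ici (estar hinv)) h Φ P K α) :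
    ∀ s₀ ∈ J, ∀ ξ : E, ∀ a ∈ Set.Ici (estar hinv), ∀ b ∈ Set.Ici (estar hinv),
      ∀ t, a ≤ t → t ≤ b →
      ‖(Φ t s₀) ξ‖ ≤ K * ((h (star h hinv t (sinv h hinv a))) ^ (-α) * ‖(Φ a s₀) ξ‖ +
        (h (star h hinv b (sinv h hinv t))) ^ (-α) * ‖(Φ b s₀) ξ‖) := by
  intro s₀ hs₀ ξ a ha b hb t hat htb
  have ht : t ∈ Ici (estar hinv) := le_trans ha hat
  have hIJ := hgr.Ici_estar_subset
  rw [hgr.apply_star_sinv (hIJ ht) (hIJ ha), hgr.apply_star_sinv (hIJ hb) (hIJ ht)]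
  exact hΦ.norm_apply_le_of_hasUHDWith hIJ hUHD hs₀ ha ht hb hat htb ξ

/-- a uniform `h`-dichotomy on `[e∗,∞)` with constants `K, α` implies
`h`-expansiveness on `[e∗,∞)` with `L = K` and `β = α`. -/
theorem statement14 {J : Set ℝ} {h hinv : ℝ → ℝ} (hgr : GrowthRate J h hinv)
    {E : Type*} [NormedAddCommGroup E] [NormedSpace ℝ E] [FiniteDimensional ℝ E]
    (Φ : ℝ → ℝ → (E →L[ℝ] E)) (hΦ : IsEvolutionFamily J Φ)
    (K α : ℝ) (hK : 1 ≤ K) (hα : 0 < α)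
    (P : ℝ → (E →L[ℝ] E)) (hUHD : HasUHDWith (Set.Ici (estar hinv)) h Φ P K α) :
    ∀ s₀ ∈ J, ∀ ξ : E, ∀ a ∈ Set.Ici (estar hinv), ∀ b ∈ Set.Ici (estar hinv),
      ∀ t, a ≤ t → t ≤ b →
      ‖(Φ t s₀) ξ‖ ≤ K * ((h (star h hinv t (sinv h hinv a))) ^ (-α) * ‖(Φ a s₀) ξ‖ +
        (h (star h hinv b (sinv h hinv t))) ^ (-α) * ‖(Φ b s₀) ξ‖) :=
  statement14_general hgr Φ hΦ K α P hUHD
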